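/- arXiv:1105.2126 — 3 statements merged into one kernel-verified Lean document; each statement's English description precedes it below -/
import Mathlib

section
/- Let δ>0, L>0, and q_x, q_s, D ∈ ℝ^{m×n} with ‖q_x + q_s - D‖_F > δ. Set θ* = (L/2)(‖q_x+q_s-D‖_F/δ - 1), X* = (θ*/(L+2θ*))(D - q_s) + ((L+θ*)/(L+2θ*)) q_x, and S* = (θ*/(L+2θ*))(D - q_x) + ((L+θ*)/(L+2θ*)) q_s. Then ‖X*+S*-D‖_F = δ, θ* > 0, and (X*,S*) minimizes (L/2)(‖X-q_x‖_F² + ‖S-q_s‖_F²) over χ = {(X,S) : ‖X+S-D‖_F ≤ δ}. -/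
open Finset

noncomputable def fprod {m n : ℕ} (A B : Matrix (Fin m) (Fin n) ℝ) : ℝ :=
  ∑ i, ∑ j, A i j * B i j

noncomputable def frob {m n : ℕ} (A : Matrix (Fin m) (Fin n) ℝ) : ℝ :=
  Real.sqrt (∑ i, ∑ j, (A i j) ^ 2)

noncomputable def l1 {m n : ℕ} (A : Matrix (Fin m) (Fin n) ℝ) : ℝ :=
  ∑ i, ∑ j, |A i j|

/-!
For `θ ≥ 0`, the Lagrangian `L/2 (‖X - q_x‖² + ‖S - q_s‖²) + θ/2 ‖X + S - D‖²` is minimised at a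
KKT point `(X*, S*)`: expanded around `(X*, S*)`, its linear terms cancel by stationarity and its
quadratic ones are nonnegative. On the feasible set the penalty term is at most `θ/2 δ²`, its value
at `(X*, S*)`, because the constraint is active there. In the closed form,
`X* - q_x = S* - q_s = -θ/(L + 2θ) (q_x + q_s - D)` and `X* + S* - D = L/(L + 2θ) (q_x + q_s - D)`,
and `θ*` is chosen so that `L/(L + 2θ*) ‖q_x + q_s - D‖ = δ`.
-/

open scoped RealInnerProductSpace

@[simps]
def Matrix.toEuclidean {m n : Type*} [Fintype m] [Fintype n] :
    Matrix m n ℝ →ₗ[ℝ] EuclideanSpace ℝ (m × n) where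
  toFun A := WithLp.toLp 2 fun p => A p.1 p.2
  map_add' _ _ := rfl
  map_smul' _ _ := rfl

theorem frob_eq_norm_toEuclidean {m n : ℕ} (A : Matrix (Fin m) (Fin n) ℝ) :
    frob A = ‖Matrix.toEuclidean A‖ := by
  simp [frob, EuclideanSpace.norm_eq, Fintype.sum_prod_type]

theorem norm_sub_sq_add_norm_sub_sq_le_of_kkt {E : Type*} [NormedAddCommGroup E]
    [InnerProductSpace ℝ E] {L θ : ℝ} (hL : 0 < L) (hθ : 0 ≤ θ) {qx qs d x₀ s₀ x s : E}
    (hx₀ : L • (x₀ - qx) + θ • (x₀ + s₀ - d) = 0)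
    (hs₀ : L • (s₀ - qs) + θ • (x₀ + s₀ - d) = 0)
    (hxs : ‖x + s - d‖ ≤ ‖x₀ + s₀ - d‖) :
    ‖x₀ - qx‖ ^ 2 + ‖s₀ - qs‖ ^ 2 ≤ ‖x - qx‖ ^ 2 + ‖s - qs‖ ^ 2 := by
  set r := x₀ + s₀ - d
  set u := x - x₀
  set v := s - s₀
  have hx : ‖x - qx‖ ^ 2 = ‖x₀ - qx‖ ^ 2 + 2 * ⟪x₀ - qx, u⟫ + ‖u‖ ^ 2 := by
    rw [← norm_add_sq_real]; congr 2; simp only [u]; abel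
  have hs : ‖s - qs‖ ^ 2 = ‖s₀ - qs‖ ^ 2 + 2 * ⟪s₀ - qs, v⟫ + ‖v‖ ^ 2 := by
    rw [← norm_add_sq_real]; congr 2; simp only [v]; abel
  have hr : ‖x + s - d‖ ^ 2 = ‖r‖ ^ 2 + 2 * ⟪r, u + v⟫ + ‖u + v‖ ^ 2 := by
    rw [← norm_add_sq_real]; congr 2; simp only [r, u, v]; abel
  have hxu : L * ⟪x₀ - qx, u⟫ = -(θ * ⟪r, u⟫) := by
    rw [← real_inner_smul_left, ← real_inner_smul_left, eq_neg_of_add_eq_zero_left hx₀,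
      inner_neg_left]
  have hsv : L * ⟪s₀ - qs, v⟫ = -(θ * ⟪r, v⟫) := by
    rw [← real_inner_smul_left, ← real_inner_smul_left, eq_neg_of_add_eq_zero_left hs₀,
      inner_neg_left]
  have hinner : ⟪r, u⟫ + ⟪r, v⟫ ≤ 0 := by
    have := pow_le_pow_left₀ (norm_nonneg _) hxs 2
    rw [← inner_add_right]
    linarith [sq_nonneg ‖u + v‖]
  have hL_mul : 0 ≤ L * (‖x - qx‖ ^ 2 + ‖s - qs‖ ^ 2 - (‖x₀ - qx‖ ^ 2 + ‖s₀ - qs‖ ^ 2)) := by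
    rw [hx, hs]
    nlinarith [mul_nonpos_of_nonneg_of_nonpos hθ hinner, sq_nonneg ‖u‖, sq_nonneg ‖v‖]
  exact sub_nonneg.1 (nonneg_of_mul_nonneg_right hL_mul hL)

section ClosedForm

variable {M : Type*} [AddCommGroup M] [Module ℝ M] {L θ : ℝ} {qx qs d x₀ s₀ : M}

theorem sub_eq_neg_smul_of_eq_combination (hLθ : L + 2 * θ ≠ 0)
    (hx₀ : x₀ = (θ / (L + 2 * θ)) • (d - qs) + ((L + θ) / (L + 2 * θ)) • qx) :
    x₀ - qx = -(θ / (L + 2 * θ)) • (qx + qs - d) := by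
  have hw : (L + θ) / (L + 2 * θ) = 1 - θ / (L + 2 * θ) := by
    rw [eq_sub_iff_add_eq, ← add_div, div_eq_one_iff_eq hLθ]; ring
  rw [hx₀, hw]
  module

theorem add_sub_eq_smul_of_eq_combination (hLθ : L + 2 * θ ≠ 0)
    (hx₀ : x₀ = (θ / (L + 2 * θ)) • (d - qs) + ((L + θ) / (L + 2 * θ)) • qx)
    (hs₀ : s₀ = (θ / (L + 2 * θ)) • (d - qx) + ((L + θ) / (L + 2 * θ)) • qs) :
    x₀ + s₀ - d = (L / (L + 2 * θ)) • (qx + qs - d) := by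
  have hw : L / (L + 2 * θ) = 1 - 2 * (θ / (L + 2 * θ)) := by
    rw [eq_sub_iff_add_eq, mul_div_assoc', ← add_div, div_eq_one_iff_eq hLθ]
  rw [show x₀ + s₀ - d = (x₀ - qx) + (s₀ - qs) + (qx + qs - d) by abel,
    sub_eq_neg_smul_of_eq_combination hLθ hx₀, sub_eq_neg_smul_of_eq_combination hLθ hs₀, hw]
  module

theorem stationary_of_eq_combination (hLθ : L + 2 * θ ≠ 0)
    (hx₀ : x₀ = (θ / (L + 2 * θ)) • (d - qs) + ((L + θ) / (L + 2 * θ)) • qx)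
    (hs₀ : s₀ = (θ / (L + 2 * θ)) • (d - qx) + ((L + θ) / (L + 2 * θ)) • qs) :
    L • (x₀ - qx) + θ • (x₀ + s₀ - d) = 0 := by
  rw [sub_eq_neg_smul_of_eq_combination hLθ hx₀, add_sub_eq_smul_of_eq_combination hLθ hx₀ hs₀]
  module

end ClosedForm

theorem stmt2 {m n : ℕ} (δ L : ℝ) (hδ : 0 < δ) (hL : 0 < L)
    (qx qs D : Matrix (Fin m) (Fin n) ℝ)
    (h : δ < frob (qx + qs - D))
    (θ : ℝ) (hθ : θ = L / 2 * (frob (qx + qs - D) / δ - 1))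
    (Xs Ss : Matrix (Fin m) (Fin n) ℝ)
    (hX : Xs = (θ / (L + 2 * θ)) • (D - qs) + ((L + θ) / (L + 2 * θ)) • qx)
    (hS : Ss = (θ / (L + 2 * θ)) • (D - qx) + ((L + θ) / (L + 2 * θ)) • qs) :
    frob (Xs + Ss - D) = δ ∧ 0 < θ ∧
    ∀ X S : Matrix (Fin m) (Fin n) ℝ, frob (X + S - D) ≤ δ →
      L / 2 * (frob (Xs - qx) ^ 2 + frob (Ss - qs) ^ 2) ≤
        L / 2 * (frob (X - qx) ^ 2 + frob (S - qs) ^ 2) := by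
  have hθ_pos : 0 < θ := by
    rw [hθ]
    exact mul_pos (half_pos hL) (sub_pos.2 ((one_lt_div hδ).2 h))
  have hLθ : L + 2 * θ ≠ 0 := by positivity
  have hweight : L / (L + 2 * θ) * frob (qx + qs - D) = δ := by
    have hf : frob (qx + qs - D) ≠ 0 := (hδ.trans h).ne'
    have hden : L + 2 * θ = L * frob (qx + qs - D) / δ := by rw [hθ]; field_simp; ring
    rw [hden]; field_simp
  have hactive : frob (Xs + Ss - D) = δ := by
    rw [add_sub_eq_smul_of_eq_combination hLθ hX hS, frob_eq_norm_toEuclidean, map_smul,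
      norm_smul, ← frob_eq_norm_toEuclidean, Real.norm_of_nonneg (by positivity), hweight]
  refine ⟨hactive, hθ_pos, fun X S hXS => ?_⟩
  have hstatX := congrArg Matrix.toEuclidean (stationary_of_eq_combination hLθ hX hS)
  have hstatS := congrArg Matrix.toEuclidean (stationary_of_eq_combination hLθ hS hX)
  simp only [frob_eq_norm_toEuclidean, map_add, map_sub, map_smul, map_zero]
    at hXS hactive hstatX hstatS ⊢
  rw [add_comm (Matrix.toEuclidean Ss)] at hstatS
  exact mul_le_mul_of_nonneg_left
    (norm_sub_sq_add_norm_sub_sq_le_of_kkt hL hθ_pos.le hstatX hstatS (hXS.trans hactive.ge))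
    (by positivity)
end

section
/- Let ξ > 0, ρ > 0, and A ∈ ℝ^{m×n} with at least one nonzero entry. Define φ(θ) = ‖min{(ξ/θ)E, (ρ/(ρ+θ))|A|}‖_F for θ > 0, where E is the all-ones matrix, |A| is the entrywise absolute value, and min is taken entrywise. Then φ is strictly decreasing on (0,∞), lim_{θ→0⁺} φ(θ) = ‖A‖_F, and lim_{θ→∞} φ(θ) = 0. Consequently, for every δ with 0 < δ < ‖A‖_F there exists a unique θ* > 0 with φ(θ*) = δ. -/
open Finset

/-! Each entry `min (ξ/θ) (ρ/(ρ+θ) |a|)` is nonincreasing in `θ`, and strictly decreasing when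
`a ≠ 0`; it tends to `|a|` as `θ → 0⁺` (the cap `ξ/θ` blows up) and to `0` as `θ → ∞`. Since the
Frobenius norm is continuous and strictly monotone on entrywise nonnegative matrices, `φ` is a
continuous strictly decreasing function from `‖A‖_F` down to `0`, so the intermediate value
theorem gives each level `δ` exactly once. -/

open Set Filter Topology

theorem StrictAntiOn.existsUnique_eq_of_tendsto {α β : Type*}
    [ConditionallyCompleteLinearOrder α] [TopologicalSpace α] [OrderTopology α]
    [DenselyOrdered α] [NoMaxOrder α] [LinearOrder β] [TopologicalSpace β]
    [OrderClosedTopology β] {f : α → β} {a : α} {l₀ l₁ y : β}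
    (hf : StrictAntiOn f (Ioi a)) (hc : ContinuousOn f (Ioi a))
    (h₀ : Tendsto f (𝓝[>] a) (𝓝 l₀)) (h₁ : Tendsto f atTop (𝓝 l₁)) (hy : y ∈ Ioo l₁ l₀) :
    ∃! x, a < x ∧ f x = y := by
  obtain ⟨x, hx, rfl⟩ := isPreconnected_Ioi.intermediate_value_Ioo (l₂ := 𝓝[>] a)
    (le_principal_iff.2 (Ioi_mem_atTop a)) inf_le_right hc h₁ h₀ hy
  exact ⟨x, ⟨hx, rfl⟩, fun x' hx' => hf.injOn hx'.1 hx hx'.2⟩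

section Frobenius

variable {m n : ℕ}

theorem continuous_frob : Continuous (frob : Matrix (Fin m) (Fin n) ℝ → ℝ) := by
  unfold frob
  fun_prop

theorem frob_zero : frob (0 : Matrix (Fin m) (Fin n) ℝ) = 0 := by
  simp [frob]

theorem frob_of_abs (A : Matrix (Fin m) (Fin n) ℝ) :
    frob (Matrix.of fun i j => |A i j|) = frob A := by
  simp [frob, sq_abs]

theorem frob_lt_frob {A B : Matrix (Fin m) (Fin n) ℝ} (hB : ∀ i j, 0 ≤ B i j)
    (hle : ∀ i j, B i j ≤ A i j) (hlt : ∃ i j, B i j < A i j) : frob B < frob A := by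
  obtain ⟨i₀, j₀, hlt⟩ := hlt
  have hsq : ∀ i j, B i j ^ 2 ≤ A i j ^ 2 := fun i j => pow_le_pow_left₀ (hB i j) (hle i j) 2
  refine Real.sqrt_lt_sqrt (by positivity)
    (sum_lt_sum (fun i _ => sum_le_sum fun j _ => hsq i j) ?_)
  exact ⟨i₀, mem_univ _, sum_lt_sum (fun j _ => hsq i₀ j)
    ⟨j₀, mem_univ _, pow_lt_pow_left₀ hlt (hB i₀ j₀) two_ne_zero⟩⟩

theorem Filter.Tendsto.frob {α : Type*} {l : Filter α} {F : α → Matrix (Fin m) (Fin n) ℝ}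
    {B : Matrix (Fin m) (Fin n) ℝ} (h : ∀ i j, Tendsto (fun x => F x i j) l (𝓝 (B i j))) :
    Tendsto (fun x => frob (F x)) l (𝓝 (frob B)) :=
  (continuous_frob.tendsto B).comp (tendsto_pi_nhds.2 fun i => tendsto_pi_nhds.2 (h i))

theorem ContinuousOn.frob {α : Type*} [TopologicalSpace α] {s : Set α}
    {F : α → Matrix (Fin m) (Fin n) ℝ} (h : ∀ i j, ContinuousOn (fun x => F x i j) s) :
    ContinuousOn (fun x => frob (F x)) s :=
  continuous_frob.comp_continuousOn (continuousOn_pi.2 fun i => continuousOn_pi.2 (h i))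

end Frobenius

noncomputable def shrink (ξ ρ θ a : ℝ) : ℝ := min (ξ / θ) (ρ / (ρ + θ) * |a|)

section Shrink

variable {ξ ρ : ℝ}

theorem shrink_nonneg (hξ : 0 ≤ ξ) (hρ : 0 ≤ ρ) {θ : ℝ} (hθ : 0 < θ) (a : ℝ) :
    0 ≤ shrink ξ ρ θ a :=
  le_min (by positivity) (by positivity)

theorem antitoneOn_shrink (hξ : 0 ≤ ξ) (hρ : 0 ≤ ρ) (a : ℝ) :
    AntitoneOn (fun θ => shrink ξ ρ θ a) (Ioi 0) := fun s hs t _ hst =>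
  min_le_min (div_le_div_of_nonneg_left hξ hs hst)
    (by have : (0 : ℝ) < ρ + s := by linarith [Set.mem_Ioi.1 hs]
        gcongr)

theorem strictAntiOn_shrink (hξ : 0 < ξ) (hρ : 0 < ρ) {a : ℝ} (ha : a ≠ 0) :
    StrictAntiOn (fun θ => shrink ξ ρ θ a) (Ioi 0) := fun s hs t _ hst =>
  min_lt_min (div_lt_div_of_pos_left hξ hs hst)
    (by have : (0 : ℝ) < ρ + s := by linarith [Set.mem_Ioi.1 hs]
        have := abs_pos.2 ha
        gcongr)

theorem continuousOn_shrink (hρ : 0 ≤ ρ) (a : ℝ) :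
    ContinuousOn (fun θ => shrink ξ ρ θ a) (Ioi 0) :=
  ContinuousOn.inf (continuousOn_const.div continuousOn_id fun _ hθ => ne_of_gt hθ)
    ((continuousOn_const.div (continuousOn_const.add continuousOn_id)
      fun _ hθ => (add_pos_of_nonneg_of_pos hρ hθ).ne').mul continuousOn_const)

theorem tendsto_shrink_nhdsGT_zero (hξ : 0 < ξ) (hρ : 0 < ρ) (a : ℝ) :
    Tendsto (fun θ => shrink ξ ρ θ a) (𝓝[>] 0) (𝓝 |a|) := by
  have hlin : Tendsto (fun θ => ρ / (ρ + θ) * |a|) (𝓝[>] 0) (𝓝 |a|) := by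
    have : ContinuousAt (fun θ => ρ / (ρ + θ) * |a|) 0 := by
      fun_prop (disch := simpa using hρ.ne')
    simpa [hρ.ne'] using this.tendsto.mono_left nhdsWithin_le_nhds
  have hcap : Tendsto (fun θ => ξ / θ) (𝓝[>] 0) atTop :=
    tendsto_inv_nhdsGT_zero.const_mul_atTop hξ
  refine hlin.congr' ?_
  filter_upwards [hcap.eventually_ge_atTop |a|, self_mem_nhdsWithin] with θ hcapθ hθ
  refine (min_eq_right (le_trans ?_ hcapθ)).symm
  exact mul_le_of_le_one_left (abs_nonneg a)
    ((div_le_one (by linarith [Set.mem_Ioi.1 hθ])).2 (by linarith [Set.mem_Ioi.1 hθ]))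

theorem tendsto_shrink_atTop (hξ : 0 ≤ ξ) (hρ : 0 ≤ ρ) (a : ℝ) :
    Tendsto (fun θ => shrink ξ ρ θ a) atTop (𝓝 0) :=
  squeeze_zero' ((eventually_gt_atTop 0).mono fun _ hθ => shrink_nonneg hξ hρ hθ a)
    (Eventually.of_forall fun _ => min_le_left _ _) (tendsto_const_nhds.div_atTop tendsto_id)

end Shrink

theorem stmt5 {m n : ℕ} (ξ ρ : ℝ) (hξ : 0 < ξ) (hρ : 0 < ρ)
    (A : Matrix (Fin m) (Fin n) ℝ) (hA : A ≠ 0)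
    (φ : ℝ → ℝ)
    (hφ : ∀ θ, φ θ = frob (Matrix.of fun i j => min (ξ / θ) (ρ / (ρ + θ) * |A i j|))) :
    StrictAntiOn φ (Set.Ioi 0) ∧
    Filter.Tendsto φ (nhdsWithin 0 (Set.Ioi 0)) (nhds (frob A)) ∧
    Filter.Tendsto φ Filter.atTop (nhds 0) ∧
    ∀ δ : ℝ, 0 < δ → δ < frob A → ∃! θ : ℝ, 0 < θ ∧ φ θ = δ := by
  obtain ⟨i₀, j₀, hA₀⟩ : ∃ i j, A i j ≠ 0 := by
    by_contra! h
    exact hA (Matrix.ext h)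
  have hφ : φ = fun θ => frob (Matrix.of fun i j => shrink ξ ρ θ (A i j)) := funext hφ
  have hanti : StrictAntiOn φ (Ioi 0) := hφ ▸ fun s hs t ht hst =>
    frob_lt_frob (fun i j => shrink_nonneg hξ.le hρ.le ht _)
      (fun i j => antitoneOn_shrink hξ.le hρ.le _ hs ht hst.le)
      ⟨i₀, j₀, strictAntiOn_shrink hξ hρ hA₀ hs ht hst⟩
  have h₀ : Tendsto φ (𝓝[>] 0) (𝓝 (frob A)) := by
    rw [hφ, ← frob_of_abs]
    exact Tendsto.frob fun i j => tendsto_shrink_nhdsGT_zero hξ hρ (A i j)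
  have h₁ : Tendsto φ atTop (𝓝 0) := by
    rw [hφ, ← frob_zero (m := m) (n := n)]
    exact Tendsto.frob fun i j => tendsto_shrink_atTop hξ.le hρ.le (A i j)
  have hc : ContinuousOn φ (Ioi 0) := hφ ▸ ContinuousOn.frob fun i j => continuousOn_shrink hρ.le _
  exact ⟨hanti, h₀, h₁, fun δ hδ₀ hδ => hanti.existsUnique_eq_of_tendsto hc h₀ h₁ ⟨hδ₀, hδ⟩⟩
end

section
/- Let Φ : ℝ^{m×n} × ℝ^{m×n} → ℝ be of the form Φ(X,S) = φ(X) + ψ(X,S) with φ convex differentiable and ψ closed convex. Fix ρ > 0 and X⁰ ∈ ℝ^{m×n}, and let (X̂, Ŝ) minimize Q(Z,S) = ψ(Z,S) + φ(X⁰) + ⟨∇φ(X⁰), Z - X⁰⟩ + (ρ/2)‖Z - X⁰‖_F² over (Z,S). If Φ(X̂, Ŝ) ≤ Q(X̂, Ŝ), then for every (X,S): (2/ρ)(Φ(X,S) − Φ(X̂,Ŝ)) ≥ ‖X − X̂‖_F² − ‖X − X⁰‖_F². -/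
open Finset

/-! The minimiser `(X̂, Ŝ)` of `Q` satisfies the quadratic growth bound
`Q(X, S) - Q(X̂, Ŝ) ≥ (ρ/2)‖X - X̂‖²`, because `Q` is `ρ`-strongly convex in its first variable:
a minimiser of a function whose chords lie `t(1-t)D(y - x)` above it grows at least by `D` away
from it. On the other hand, the gradient inequality for `φ` bounds `Q(X, S)` by
`Φ(X, S) + (ρ/2)‖X - X⁰‖²`, and `Φ(X̂, Ŝ) ≤ Q(X̂, Ŝ)` by hypothesis. -/

open Filter Topology

lemma frob_sq {m n : ℕ} (A : Matrix (Fin m) (Fin n) ℝ) :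
    frob A ^ 2 = ∑ i, ∑ j, (A i j) ^ 2 := by
  rw [frob, Real.sq_sqrt]
  positivity

lemma fprod_smul_add_smul {m n : ℕ} (G A B : Matrix (Fin m) (Fin n) ℝ) (a b : ℝ) :
    fprod G (a • A + b • B) = a * fprod G A + b * fprod G B := by
  simp only [fprod, mul_sum, ← sum_add_distrib, Matrix.add_apply, Matrix.smul_apply, smul_eq_mul]
  exact sum_congr rfl fun i _ => sum_congr rfl fun j _ => by ring

lemma frob_sq_smul_add_smul {m n : ℕ} {a b : ℝ} (hab : a + b = 1)
    (A B : Matrix (Fin m) (Fin n) ℝ) :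
    frob (a • A + b • B) ^ 2 = a * frob A ^ 2 + b * frob B ^ 2 - a * b * frob (B - A) ^ 2 := by
  obtain rfl : b = 1 - a := by linarith
  simp only [frob_sq, mul_sum, ← sum_add_distrib, ← sum_sub_distrib, Matrix.add_apply,
    Matrix.sub_apply, Matrix.smul_apply, smul_eq_mul]
  exact sum_congr rfl fun i _ => sum_congr rfl fun j _ => by ring

lemma le_of_forall_one_sub_mul_le {a b : ℝ} (h : ∀ t ∈ Set.Ioo (0 : ℝ) 1, (1 - t) * a ≤ b) :
    a ≤ b := by
  have hlim : Tendsto (fun t : ℝ => (1 - t) * a) (𝓝[>] 0) (𝓝 a) := by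
    have : Continuous fun t : ℝ => (1 - t) * a := by fun_prop
    simpa using (this.tendsto 0).mono_left nhdsWithin_le_nhds
  exact le_of_tendsto hlim (eventually_of_mem (Ioo_mem_nhdsGT one_pos) h)

lemma IsMinOn.le_sub_of_forall_le_sub_mul {E : Type*} [AddCommGroup E] [Module ℝ E]
    {f D : E → ℝ} {x₀ : E} (hmin : IsMinOn f Set.univ x₀)
    (hf : ∀ x y (a b : ℝ), 0 < a → 0 < b → a + b = 1 →
      f (a • x + b • y) ≤ a * f x + b * f y - a * b * D (y - x))
    (y : E) : D (y - x₀) ≤ f y - f x₀ := by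
  refine le_of_forall_one_sub_mul_le fun t ⟨ht0, ht1⟩ => ?_
  have hchord := (hmin (Set.mem_univ ((1 - t) • x₀ + t • y))).trans
    (hf x₀ y (1 - t) t (by linarith) ht0 (by ring))
  have : t * ((1 - t) * D (y - x₀)) ≤ t * (f y - f x₀) := by linarith
  exact le_of_mul_le_mul_left this ht0

lemma proxModel_le_sub_mul {m n : ℕ}
    {ψ : Matrix (Fin m) (Fin n) ℝ × Matrix (Fin m) (Fin n) ℝ → ℝ} (hψ : ConvexOn ℝ Set.univ ψ)
    {Q : Matrix (Fin m) (Fin n) ℝ → Matrix (Fin m) (Fin n) ℝ → ℝ} {c ρ : ℝ}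
    {G X0 : Matrix (Fin m) (Fin n) ℝ}
    (hQ : ∀ Z S, Q Z S = ψ (Z, S) + c + fprod G (Z - X0) + ρ / 2 * frob (Z - X0) ^ 2)
    (p q : Matrix (Fin m) (Fin n) ℝ × Matrix (Fin m) (Fin n) ℝ) {a b : ℝ}
    (ha : 0 ≤ a) (hb : 0 ≤ b) (hab : a + b = 1) :
    Function.uncurry Q (a • p + b • q) ≤ a * Function.uncurry Q p + b * Function.uncurry Q q
      - a * b * (ρ / 2 * frob (q - p).1 ^ 2) := by
  have hshift : (a • p + b • q).1 - X0 = a • (p.1 - X0) + b • (q.1 - X0) := by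
    obtain rfl : b = 1 - a := by linarith
    simp only [Prod.fst_add, Prod.smul_fst]
    module
  have hdiff : (q.1 - X0) - (p.1 - X0) = (q - p).1 := by simp
  have hψmix := hψ.2 (Set.mem_univ p) (Set.mem_univ q) ha hb hab
  simp only [smul_eq_mul] at hψmix
  simp only [Function.uncurry, hQ, Prod.mk.eta, hshift, fprod_smul_add_smul,
    frob_sq_smul_add_smul hab, hdiff]
  linear_combination hψmix - c * hab

theorem stmt10_general {m n : ℕ}
    (φ : Matrix (Fin m) (Fin n) ℝ → ℝ)
    (gradφ : Matrix (Fin m) (Fin n) ℝ → Matrix (Fin m) (Fin n) ℝ)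
    (hgrad : ∀ X Y, φ X + fprod (gradφ X) (Y - X) ≤ φ Y)
    (ψ : Matrix (Fin m) (Fin n) ℝ × Matrix (Fin m) (Fin n) ℝ → ℝ)
    (hψconv : ConvexOn ℝ Set.univ ψ)
    (ρ : ℝ) (hρ : 0 < ρ) (X0 : Matrix (Fin m) (Fin n) ℝ)
    (Q : Matrix (Fin m) (Fin n) ℝ → Matrix (Fin m) (Fin n) ℝ → ℝ)
    (hQ : ∀ Z S, Q Z S = ψ (Z, S) + φ X0 + fprod (gradφ X0) (Z - X0) + ρ / 2 * frob (Z - X0) ^ 2)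
    (Xh Sh : Matrix (Fin m) (Fin n) ℝ)
    (hmin : ∀ Z S, Q Xh Sh ≤ Q Z S)
    (Φ : Matrix (Fin m) (Fin n) ℝ → Matrix (Fin m) (Fin n) ℝ → ℝ)
    (hΦ : ∀ X S, Φ X S = φ X + ψ (X, S))
    (hcond : Φ Xh Sh ≤ Q Xh Sh) :
    ∀ X S, frob (X - Xh) ^ 2 - frob (X - X0) ^ 2 ≤ 2 / ρ * (Φ X S - Φ Xh Sh) := by
  intro X S
  have hgrowth : ρ / 2 * frob (X - Xh) ^ 2 ≤ Q X S - Q Xh Sh :=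
    IsMinOn.le_sub_of_forall_le_sub_mul (f := Function.uncurry Q) (D := fun p => ρ / 2 * frob p.1 ^ 2)
      (x₀ := (Xh, Sh))
      (fun _ _ => hmin _ _)
      (fun p q _ _ ha hb hab => proxModel_le_sub_mul hψconv hQ p q ha.le hb.le hab) (X, S)
  have hupper : Q X S ≤ Φ X S + ρ / 2 * frob (X - X0) ^ 2 := by
    rw [hQ, hΦ]
    linarith [hgrad X0 X]
  have hρ2 : 0 ≤ 2 / ρ := by positivity
  calc frob (X - Xh) ^ 2 - frob (X - X0) ^ 2
      = 2 / ρ * (ρ / 2 * frob (X - Xh) ^ 2 - ρ / 2 * frob (X - X0) ^ 2) := by field_simp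
    _ ≤ 2 / ρ * (Φ X S - Φ Xh Sh) := mul_le_mul_of_nonneg_left (by linarith) hρ2

theorem stmt10 {m n : ℕ}
    (φ : Matrix (Fin m) (Fin n) ℝ → ℝ)
    (gradφ : Matrix (Fin m) (Fin n) ℝ → Matrix (Fin m) (Fin n) ℝ)
    (hφconv : ConvexOn ℝ Set.univ φ)
    (hgrad : ∀ X Y, φ X + fprod (gradφ X) (Y - X) ≤ φ Y)
    (ψ : Matrix (Fin m) (Fin n) ℝ × Matrix (Fin m) (Fin n) ℝ → ℝ)
    (hψconv : ConvexOn ℝ Set.univ ψ) (hψlsc : LowerSemicontinuous ψ)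
    (ρ : ℝ) (hρ : 0 < ρ) (X0 : Matrix (Fin m) (Fin n) ℝ)
    (Q : Matrix (Fin m) (Fin n) ℝ → Matrix (Fin m) (Fin n) ℝ → ℝ)
    (hQ : ∀ Z S, Q Z S = ψ (Z, S) + φ X0 + fprod (gradφ X0) (Z - X0) + ρ / 2 * frob (Z - X0) ^ 2)
    (Xh Sh : Matrix (Fin m) (Fin n) ℝ)
    (hmin : ∀ Z S, Q Xh Sh ≤ Q Z S)
    (Φ : Matrix (Fin m) (Fin n) ℝ → Matrix (Fin m) (Fin n) ℝ → ℝ)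
    (hΦ : ∀ X S, Φ X S = φ X + ψ (X, S))
    (hcond : Φ Xh Sh ≤ Q Xh Sh) :
    ∀ X S, frob (X - Xh) ^ 2 - frob (X - X0) ^ 2 ≤ 2 / ρ * (Φ X S - Φ Xh Sh) :=
  stmt10_general φ gradφ hgrad ψ hψconv ρ hρ X0 Q hQ Xh Sh hmin Φ hΦ hcond
end
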